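/- Let n ≥ 2 and let x be a prefix of length k of a word in A_n with 1 ≤ k ≤ f_{2n} (or a prefix of length k of a word in B_n with 1 ≤ k ≤ f_{2n−1}). Then the number of occurrences of the letter b in x is either ⌊k/τ²⌋ or ⌈k/τ²⌉, where τ = (1+√5)/2. -/
import Mathlib


/-- The two-letter alphabet. -/
inductive Letter : Type
  | a : Letter
  | b : Letter
deriving DecidableEq

/-- A word is a finite sequence of letters. -/
abbrev Word := List Letter

/-- Concatenation set `UV = {uv : u ∈ U, v ∈ V}`. -/
def concatSet (U V : Set Word) : Set Word := {w | ∃ u ∈ U, ∃ v ∈ V, w = u ++ v}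

mutual
  /-- The sets `A_n` of inflated words (indexed so that `Aset 1 = {a}`). -/
  def Aset : ℕ → Set Word
    | 0 => ∅
    | 1 => {[Letter.a]}
    | n + 2 => concatSet (Bset (n + 1)) (concatSet (Aset (n + 1)) (Aset (n + 1)))
  /-- The sets `B_n` of inflated words (indexed so that `Bset 1 = {b}`). -/
  def Bset : ℕ → Set Word
    | 0 => ∅
    | 1 => {[Letter.b]}
    | n + 2 => concatSet (Aset (n + 1)) (Bset (n + 1)) ∪ concatSet (Bset (n + 1)) (Aset (n + 1))
end

/-- The sub-word `w[a,b] = w_a w_{a+1} … w_b` (1-indexed). -/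
def wordSlice (w : Word) (i j : ℕ) : Word := (w.drop (i - 1)).take (j - i + 1)

/-- `W[a,b] = {w[a,b] : w ∈ W}`. -/
def setSlice (W : Set Word) (i j : ℕ) : Set Word := {x | ∃ w ∈ W, x = wordSlice w i j}

/-- `x` is a sub-word (contiguous factor) of `w`. -/
def IsFactor (x w : Word) : Prop := ∃ u v : Word, w = u ++ x ++ v

/-- `F(S, m)`: the set of all sub-words of length `m` of words in `S`. -/
def FactorSet (S : Set Word) (m : ℕ) : Set Word :=
  {x | x.length = m ∧ ∃ w ∈ S, IsFactor x w}

/-- `F(A, m) = ⋃_{n ≥ 1} F(A_n, m)`. -/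
def FA (m : ℕ) : Set Word := ⋃ n ∈ {n : ℕ | 1 ≤ n}, FactorSet (Aset n) m

/-- `F(B, m) = ⋃_{n ≥ 1} F(B_n, m)`. -/
def FB (m : ℕ) : Set Word := ⋃ n ∈ {n : ℕ | 1 ≤ n}, FactorSet (Bset n) m

/-- The golden mean `τ = (1 + √5)/2`. -/
noncomputable def tau : ℝ := (1 + Real.sqrt 5) / 2

/- ===== auxiliary development ===== -/

noncomputable def uu : ℝ := (Real.sqrt 5 - 1) / 2

lemma s5_sq : Real.sqrt 5 ^ 2 = 5 := Real.sq_sqrt (by norm_num)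
lemma s5_lb : 2 < Real.sqrt 5 := by nlinarith [s5_sq, Real.sqrt_nonneg 5]
lemma s5_ub : Real.sqrt 5 < 3 := by nlinarith [s5_sq, Real.sqrt_nonneg 5]
lemma s5_ub' : Real.sqrt 5 < 2.25 := by nlinarith [s5_sq, Real.sqrt_nonneg 5]
lemma uu_lt58 : uu < 5/8 := by unfold uu; linarith [s5_ub']

lemma uu_pos : 0 < uu := by unfold uu; linarith [s5_lb]
lemma uu_half : 1/2 < uu := by unfold uu; linarith [s5_lb]
lemma uu_lt_one : uu < 1 := by unfold uu; linarith [s5_ub]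
lemma uu_sq : uu^2 = 1 - uu := by
  unfold uu
  rw [div_pow, show (Real.sqrt 5 - 1)^2 = Real.sqrt 5 ^2 - 2*Real.sqrt 5 + 1 by ring, s5_sq]
  ring
lemma uu3 : uu^3 = 2*uu - 1 := by linear_combination (uu - 1) * uu_sq
lemma uu4 : uu^4 = 2 - 3*uu := by linear_combination (uu^2 - uu + 2) * uu_sq
lemma uu5 : uu^5 = 5*uu - 3 := by linear_combination (uu^3 - uu^2 + 2*uu - 3) * uu_sq

/-- The prefix error. -/
noncomputable def err (w : Word) (k : ℕ) : ℝ :=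
  ((w.take k).count Letter.b : ℝ) - k * uu^2

lemma err_left (w1 w2 : Word) (k : ℕ) (hk : k ≤ w1.length) :
    err (w1 ++ w2) k = err w1 k := by
  unfold err
  rw [List.take_append_of_le_length hk]

lemma err_right (w1 w2 : Word) (k : ℕ) (hk : w1.length ≤ k) :
    err (w1 ++ w2) k = err w1 w1.length + err w2 (k - w1.length) := by
  unfold err
  rw [List.take_append, List.take_of_length_le hk,
    List.take_length, List.count_append]
  have hk' : ((k - w1.length : ℕ) : ℝ) = (k : ℝ) - (w1.length : ℝ) := by
    push_cast [Nat.cast_sub hk]; ring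
  push_cast
  rw [hk']; ring

lemma floor_or_ceil (c : ℕ) (y : ℝ) (h1 : -1 < (c:ℝ) - y) (h2 : (c:ℝ) - y < 1) :
    (c : ℤ) = ⌊y⌋ ∨ (c : ℤ) = ⌈y⌉ := by
  rcases le_or_gt ((c:ℝ)) y with h | h
  · left; symm
    rw [Int.floor_eq_iff]
    constructor
    · exact_mod_cast h
    · push_cast; linarith
  · right; symm
    rw [Int.ceil_eq_iff]
    constructor
    · push_cast; linarith
    · exact_mod_cast h.le

set_option maxHeartbeats 2000000 in
lemma main_invariant : ∀ n : ℕ, 1 ≤ n →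
    (∀ w ∈ Aset n, w.length = Nat.fib (2*n) ∧ err w w.length = -uu^(2*n) ∧
      ∀ k ≤ w.length, -uu + uu^(2*n+1) ≤ err w k ∧ err w k ≤ 1 - uu^(2*n-2)) ∧
    (∀ w ∈ Bset n, w.length = Nat.fib (2*n-1) ∧ err w w.length = uu^(2*n-1) ∧
      ∀ k ≤ w.length, -uu + uu^(2*n-1) ≤ err w k ∧ err w k ≤ 1 - uu^(2*n)) := by
  have cA0 : ([Letter.a].take 0).count Letter.b = 0 := by decide
  have cA1 : ([Letter.a].take 1).count Letter.b = 0 := by decide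
  have cB0 : ([Letter.b].take 0).count Letter.b = 0 := by decide
  have cB1 : ([Letter.b].take 1).count Letter.b = 1 := by decide
  intro n hn
  induction n, hn using Nat.le_induction with
  | base =>
    constructor
    · intro w hw
      rw [show Aset 1 = {[Letter.a]} from rfl, Set.mem_singleton_iff] at hw
      subst hw
      refine ⟨by decide, ?_, ?_⟩
      · unfold err
        simp only [List.length_singleton, cA1]
        push_cast
        norm_num
      · intro k hk
        simp only [List.length_singleton] at hk
        interval_cases k <;> unfold err <;>
          simp only [cA0, cA1, show (2*1+1 : ℕ) = 3 from rfl, show (2*1-1 : ℕ) = 1 from rfl,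
            show (2*1-2 : ℕ) = 0 from rfl, show (2*1 : ℕ) = 2 from rfl, pow_zero, pow_one] <;>
          push_cast <;> refine ⟨?_, ?_⟩ <;>
          nlinarith [uu_sq, uu3, uu_pos, uu_half, uu_lt_one, sq_nonneg uu]
    · intro w hw
      rw [show Bset 1 = {[Letter.b]} from rfl, Set.mem_singleton_iff] at hw
      subst hw
      refine ⟨by decide, ?_, ?_⟩
      · unfold err
        simp only [List.length_singleton, cB1]
        push_cast
        norm_num
        nlinarith [uu_sq]
      · intro k hk
        simp only [List.length_singleton] at hk
        interval_cases k <;> unfold err <;>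
          simp only [cB0, cB1, show (2*1+1 : ℕ) = 3 from rfl, show (2*1-1 : ℕ) = 1 from rfl,
            show (2*1-2 : ℕ) = 0 from rfl, show (2*1 : ℕ) = 2 from rfl, pow_zero, pow_one] <;>
          push_cast <;> refine ⟨?_, ?_⟩ <;>
          nlinarith [uu_sq, uu3, uu_pos, uu_half, uu_lt_one, sq_nonneg uu]
  | succ n hn ih =>
    obtain ⟨m, rfl⟩ : ∃ m, n = m + 1 := ⟨n - 1, by omega⟩
    obtain ⟨IA, IB⟩ := ih
    -- normalize old-level exponents in IH
    simp only [show 2*(m+1)-1 = 2*m+1 from by omega, show 2*(m+1) = 2*m+2 from by omega,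
      show 2*(m+1)+1 = 2*m+3 from by omega, show 2*(m+1)-2 = 2*m from by omega,
      show 2*m+2+1 = 2*m+3 from by omega, show 2*m+2-1 = 2*m+1 from by omega,
      show 2*m+2-2 = 2*m from by omega] at IA IB
    have hS : (0:ℝ) ≤ uu^(2*m) := pow_nonneg uu_pos.le _
    have hup : ∀ j : ℕ, uu^(2*m+j) = uu^(2*m) * uu^j := fun j => pow_add uu (2*m) j
    have hfib2 : Nat.fib (2*m+3) = Nat.fib (2*m+1) + Nat.fib (2*m+2) := by
      rw [show 2*m+3 = (2*m+1)+2 from by ring, Nat.fib_add_two,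
        show 2*m+1+1 = 2*m+2 from by ring]
    have hfib1 : Nat.fib (2*m+4) = Nat.fib (2*m+1) + (Nat.fib (2*m+2) + Nat.fib (2*m+2)) := by
      rw [show 2*m+4 = (2*m+2)+2 from by ring, Nat.fib_add_two,
        show 2*m+2+1 = 2*m+3 from by ring, hfib2]
      ring
    constructor
    · -- A_{m+2} = B_{m+1} A_{m+1} A_{m+1}
      intro w hw
      obtain ⟨wb, hwb, v, hv, rfl⟩ := hw
      obtain ⟨wa1, hwa1, wa2, hwa2, rfl⟩ := hv
      obtain ⟨hbl, hbf, hbp⟩ := IB wb hwb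
      obtain ⟨ha1l, ha1f, ha1p⟩ := IA wa1 hwa1
      obtain ⟨ha2l, ha2f, ha2p⟩ := IA wa2 hwa2
      simp only [show 2*(m+2)-2 = 2*m+2 from by omega, show 2*(m+2)-1 = 2*m+3 from by omega,
        show 2*(m+2) = 2*m+4 from by omega, show 2*(m+2)+1 = 2*m+5 from by omega,
        show 2*m+4+1 = 2*m+5 from by omega, show 2*m+4-1 = 2*m+3 from by omega,
        show 2*m+4-2 = 2*m+2 from by omega]
      have hlen : (wb ++ (wa1 ++ wa2)).length = Nat.fib (2*m+4) := by
        simp only [List.length_append, hbl, ha1l, ha2l, hfib1]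
      refine ⟨hlen, ?_, ?_⟩
      · -- full error
        have h1 : err (wb ++ (wa1 ++ wa2)) (wb ++ (wa1 ++ wa2)).length
            = err wb wb.length + err (wa1 ++ wa2) ((wb ++ (wa1 ++ wa2)).length - wb.length) := by
          apply err_right
          simp only [List.length_append]
          omega
        have h2 : (wb ++ (wa1 ++ wa2)).length - wb.length = wa1.length + wa2.length := by
          simp only [List.length_append]
          omega
        rw [h1, h2]
        have h3 : err (wa1 ++ wa2) (wa1.length + wa2.length)
            = err wa1 wa1.length + err wa2 (wa1.length + wa2.length - wa1.length) := by
          apply err_right; omega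
        have h4 : wa1.length + wa2.length - wa1.length = wa2.length := by omega
        rw [h3, h4, hbf, ha1f, ha2f]
        simp only [hup, uu_sq, uu3, uu4, uu5, pow_one]
        ring
      · -- prefix bounds
        intro k hk
        simp only [List.length_append] at hk
        rcases le_or_gt k wb.length with h1 | h1
        · rw [err_left _ _ _ h1]
          obtain ⟨hl, hr⟩ := hbp k h1
          simp only [hup, uu_sq, uu3, uu4, uu5, pow_one] at hl hr ⊢
          constructor <;> nlinarith [hS, uu_pos, uu_half, uu_lt_one, uu_lt58]
        · rw [err_right _ _ _ h1.le, hbf]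
          rcases le_or_gt (k - wb.length) wa1.length with h2 | h2
          · rw [err_left _ _ _ h2]
            obtain ⟨hl, hr⟩ := ha1p (k - wb.length) h2
            simp only [hup, uu_sq, uu3, uu4, uu5, pow_one] at hl hr ⊢
            constructor <;> nlinarith [hS, uu_pos, uu_half, uu_lt_one, uu_lt58]
          · rw [err_right _ _ _ h2.le, ha1f]
            have h3 : k - wb.length - wa1.length ≤ wa2.length := by omega
            obtain ⟨hl, hr⟩ := ha2p (k - wb.length - wa1.length) h3
            simp only [hup, uu_sq, uu3, uu4, uu5, pow_one] at hl hr ⊢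
            constructor <;> nlinarith [hS, uu_pos, uu_half, uu_lt_one, uu_lt58]
    · -- B_{m+2} = A_{m+1} B_{m+1} ∪ B_{m+1} A_{m+1}
      intro w hw
      simp only [show 2*(m+2)-2 = 2*m+2 from by omega, show 2*(m+2)-1 = 2*m+3 from by omega,
        show 2*(m+2) = 2*m+4 from by omega, show 2*(m+2)+1 = 2*m+5 from by omega,
        show 2*m+4+1 = 2*m+5 from by omega, show 2*m+4-1 = 2*m+3 from by omega,
        show 2*m+4-2 = 2*m+2 from by omega]
      rcases hw with hw | hw
      · -- A B
        obtain ⟨wa, hwa, wbb, hwbb, rfl⟩ := hw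
        obtain ⟨hal, haf, hap⟩ := IA wa hwa
        obtain ⟨hbl, hbf, hbp⟩ := IB wbb hwbb
        have hlen : (wa ++ wbb).length = Nat.fib (2*m+3) := by
          simp only [List.length_append, hal, hbl, hfib2]
          omega
        refine ⟨hlen, ?_, ?_⟩
        · have h1 : err (wa ++ wbb) (wa ++ wbb).length
              = err wa wa.length + err wbb ((wa ++ wbb).length - wa.length) := by
            apply err_right; simp only [List.length_append]; omega
          have h2 : (wa ++ wbb).length - wa.length = wbb.length := by
            simp only [List.length_append]; omega
          rw [h1, h2, haf, hbf]
          simp only [hup, uu_sq, uu3, uu4, uu5, pow_one]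
          ring
        · intro k hk
          simp only [List.length_append] at hk
          rcases le_or_gt k wa.length with h1 | h1
          · rw [err_left _ _ _ h1]
            obtain ⟨hl, hr⟩ := hap k h1
            simp only [hup, uu_sq, uu3, uu4, uu5, pow_one] at hl hr ⊢
            constructor <;> nlinarith [hS, uu_pos, uu_half, uu_lt_one, uu_lt58]
          · rw [err_right _ _ _ h1.le, haf]
            have h2 : k - wa.length ≤ wbb.length := by omega
            obtain ⟨hl, hr⟩ := hbp (k - wa.length) h2
            simp only [hup, uu_sq, uu3, uu4, uu5, pow_one] at hl hr ⊢
            constructor <;> nlinarith [hS, uu_pos, uu_half, uu_lt_one, uu_lt58]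
      · -- B A
        obtain ⟨wbb, hwbb, wa, hwa, rfl⟩ := hw
        obtain ⟨hbl, hbf, hbp⟩ := IB wbb hwbb
        obtain ⟨hal, haf, hap⟩ := IA wa hwa
        have hlen : (wbb ++ wa).length = Nat.fib (2*m+3) := by
          simp only [List.length_append, hal, hbl, hfib2]
        refine ⟨hlen, ?_, ?_⟩
        · have h1 : err (wbb ++ wa) (wbb ++ wa).length
              = err wbb wbb.length + err wa ((wbb ++ wa).length - wbb.length) := by
            apply err_right; simp only [List.length_append]; omega
          have h2 : (wbb ++ wa).length - wbb.length = wa.length := by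
            simp only [List.length_append]; omega
          rw [h1, h2, haf, hbf]
          simp only [hup, uu_sq, uu3, uu4, uu5, pow_one]
          ring
        · intro k hk
          simp only [List.length_append] at hk
          rcases le_or_gt k wbb.length with h1 | h1
          · rw [err_left _ _ _ h1]
            obtain ⟨hl, hr⟩ := hbp k h1
            simp only [hup, uu_sq, uu3, uu4, uu5, pow_one] at hl hr ⊢
            constructor <;> nlinarith [hS, uu_pos, uu_half, uu_lt_one, uu_lt58]
          · rw [err_right _ _ _ h1.le, hbf]
            have h2 : k - wbb.length ≤ wa.length := by omega
            obtain ⟨hl, hr⟩ := hap (k - wbb.length) h2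
            simp only [hup, uu_sq, uu3, uu4, uu5, pow_one] at hl hr ⊢
            constructor <;> nlinarith [hS, uu_pos, uu_half, uu_lt_one, uu_lt58]

theorem count_b_in_prefix (n : ℕ) (hn : 2 ≤ n) (k : ℕ) (x : Word)
    (h : (1 ≤ k ∧ k ≤ Nat.fib (2 * n) ∧ ∃ w ∈ Aset n, x = w.take k) ∨
         (1 ≤ k ∧ k ≤ Nat.fib (2 * n - 1) ∧ ∃ w ∈ Bset n, x = w.take k)) :
    (x.count Letter.b : ℤ) = ⌊(k : ℝ) / tau ^ 2⌋ ∨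
      (x.count Letter.b : ℤ) = ⌈(k : ℝ) / tau ^ 2⌉ := by
  have ht : tau * uu = 1 := by
    unfold tau uu; linear_combination (1/4) * s5_sq
  have hdiv : (k : ℝ) / tau^2 = k * uu^2 := by
    have htau : (0:ℝ) < tau := by unfold tau; positivity
    rw [div_eq_iff (by positivity)]
    linear_combination (-(k:ℝ) * (tau * uu + 1)) * ht
  rw [hdiv]
  rcases h with ⟨hk1, hk2, w, hw, rfl⟩ | ⟨hk1, hk2, w, hw, rfl⟩
  · obtain ⟨hlen, _, hpre⟩ := (main_invariant n (by omega)).1 w hw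
    obtain ⟨hl, hr⟩ := hpre k (by omega)
    unfold err at hl hr
    apply floor_or_ceil
    · have h1 : (0:ℝ) < uu^(2*n+1) := pow_pos uu_pos _
      linarith [uu_lt_one]
    · have h2 : (0:ℝ) < uu^(2*n-2) := pow_pos uu_pos _
      linarith
  · obtain ⟨hlen, _, hpre⟩ := (main_invariant n (by omega)).2 w hw
    obtain ⟨hl, hr⟩ := hpre k (by omega)
    unfold err at hl hr
    apply floor_or_ceil
    · have h1 : (0:ℝ) < uu^(2*n-1) := pow_pos uu_pos _
      linarith [uu_lt_one]
    · have h2 : (0:ℝ) < uu^(2*n) := pow_pos uu_pos _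
      linarith
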